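/- Let d ≥ 1, let r = (r_1,…,r_d) with r_j > 0, set g(r) = (d⁻¹ Σ_{j=1}^d 1/r_j)⁻¹ and a_j = 2^{g(r)/r_j}. For an integer n ≥ 1 define F_n : ℝ^d → ℝ by F_n(x) = ∏_{j=1}^d √(2/π)·sin(a_j^n x_j)/x_j − ∏_{j=1}^d √(2/π)·sin(a_j^{n−1} x_j)/x_j, where sin(σ·x)/x is interpreted as σ when x = 0. Let 1 < p < ∞ and 1/p + 1/p' = 1. Then F_n ∈ L_p(ℝ^d), and there exist constants c, C > 0 depending only on d and p such that for all integers n ≥ 1: c·2^{dn/p'} ≤ ‖F_n‖_{L_p(ℝ^d)} ≤ C·2^{dn/p'}. -/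

import Mathlib

/-!
Write `G_m(x) = ∏_j √(2/π) a_j^m sinc(a_j^m x_j)`, so that `F_n = G_n - G_{n-1}`. Since `G_m` is a
tensor product of dilated sinc functions, Fubini and the substitution `y = σx` give
`‖G_m‖_p = K (∏_j a_j^m)^{1/p'} = K 2^{dm/p'}`, where `K = (√(2/π) ‖sinc‖_p)^d` is finite because
`|sinc x| ≤ 2/(1+|x|)` and `p > 1`. As `‖G_{n-1}‖_p = 2^{-d/p'} ‖G_n‖_p`, the triangle inequality
puts `‖F_n‖_p` between `(1 ∓ 2^{-d/p'}) K 2^{dn/p'}`.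
-/

open MeasureTheory

/-- `g(r) = (d⁻¹ ∑ 1/r_j)⁻¹`. -/
noncomputable def gOf (d : ℕ) (r : Fin d → ℝ) : ℝ :=
  (((d : ℝ))⁻¹ * ∑ j, (r j)⁻¹)⁻¹

/-- `a_j = 2^{g(r)/r_j}`. -/
noncomputable def aOf (d : ℕ) (r : Fin d → ℝ) (j : Fin d) : ℝ :=
  (2 : ℝ) ^ (gOf d r / r j)

/-- `sin(σx)/x`, interpreted as `σ` at `x = 0`. -/
noncomputable def sinK (σ x : ℝ) : ℝ :=
  if x = 0 then σ else Real.sin (σ * x) / x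

/-- `F_n(x) = ∏_j √(2/π) sin(a_j^n x_j)/x_j − ∏_j √(2/π) sin(a_j^{n-1} x_j)/x_j`. -/
noncomputable def Fn (d : ℕ) (r : Fin d → ℝ) (n : ℕ) : (Fin d → ℝ) → ℝ :=
  fun x =>
    (∏ j, Real.sqrt (2 / Real.pi) * sinK (aOf d r j ^ n) (x j)) -
    (∏ j, Real.sqrt (2 / Real.pi) * sinK (aOf d r j ^ (n - 1)) (x j))

open scoped ENNReal
open Real

lemma abs_sinc_mul_one_add_abs_le (x : ℝ) : |sinc x| * (1 + |x|) ≤ 2 := by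
  have hmul : |sinc x| * |x| ≤ 1 := by
    rcases eq_or_ne x 0 with rfl | hx
    · simp
    · rw [sinc_of_ne_zero hx, abs_div, div_mul_cancel₀ _ (abs_ne_zero.2 hx)]
      exact abs_sin_le_one x
  nlinarith [abs_sinc_le_one x]

lemma memLp_sinc {p : ℝ≥0∞} (hp : 1 < p) : MemLp sinc p volume := by
  rcases eq_or_ne p ∞ with rfl | hp_top
  · exact memLp_top_of_bound continuous_sinc.aestronglyMeasurable 1
      (ae_of_all _ fun x => by simpa using abs_sinc_le_one x)
  have hq : 1 < p.toReal := by
    simpa using ENNReal.toReal_strict_mono hp_top hp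
  refine (integrable_norm_rpow_iff continuous_sinc.aestronglyMeasurable
    (zero_lt_one.trans hp).ne' hp_top).1 ?_
  have hdom : Integrable (fun x : ℝ => 2 ^ p.toReal * (1 + ‖x‖) ^ (-p.toReal)) :=
    (integrable_one_add_norm (by simpa using hq)).const_mul _
  refine hdom.mono'
    (continuous_sinc.norm.rpow_const fun _ => Or.inr (by linarith)).aestronglyMeasurable
    (ae_of_all _ fun x => ?_)
  have h1 : 0 < 1 + ‖x‖ := by positivity
  rw [norm_of_nonneg (by positivity), Real.rpow_neg h1.le, ← div_eq_mul_inv,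
    ← Real.div_rpow zero_le_two h1.le]
  refine Real.rpow_le_rpow (norm_nonneg _) ?_ (by linarith)
  rw [le_div_iff₀ h1, norm_eq_abs, norm_eq_abs]
  exact abs_sinc_mul_one_add_abs_le x

lemma eLpNorm_sinc_ne_zero {p : ℝ≥0∞} (hp : p ≠ 0) : eLpNorm sinc p volume ≠ 0 := by
  rw [Ne, eLpNorm_eq_zero_iff continuous_sinc.aestronglyMeasurable hp]
  intro h
  simpa using congr_fun ((continuous_sinc.ae_eq_iff_eq volume continuous_zero).1 h) 0

lemma sinK_eq_mul_sinc (σ x : ℝ) : sinK σ x = σ * sinc (σ * x) := by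
  rcases eq_or_ne x 0 with rfl | hx
  · simp [sinK]
  rcases eq_or_ne σ 0 with rfl | hσ
  · simp [sinK]
  rw [sinK, if_neg hx, sinc_of_ne_zero (mul_ne_zero hσ hx)]
  field_simp

lemma eLpNorm_comp_mul_left {F : Type*} [NormedAddCommGroup F] (f : ℝ → F) {σ : ℝ} (hσ : σ ≠ 0)
    (p : ℝ≥0∞) :
    eLpNorm (fun x => f (σ * x)) p volume =
      ENNReal.ofReal |σ⁻¹| ^ (1 / p).toReal * eLpNorm f p volume := by
  rw [← Function.comp_def, ← (measurableEmbedding_mulLeft₀ hσ).eLpNorm_map_measure,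
    Real.map_volume_mul_left hσ, eLpNorm_smul_measure_of_ne_zero (by simpa using hσ), smul_eq_mul]

lemma eLpNorm_sinK {σ : ℝ} (hσ : 0 < σ) (p : ℝ≥0∞) :
    eLpNorm (sinK σ) p volume =
      ENNReal.ofReal (σ ^ (1 - (1 / p).toReal)) * eLpNorm sinc p volume := by
  have hsinK : sinK σ = σ • fun x => sinc (σ * x) := funext (sinK_eq_mul_sinc σ)
  rw [hsinK, eLpNorm_const_smul, eLpNorm_comp_mul_left _ hσ.ne', ← mul_assoc,
    abs_of_pos (inv_pos.2 hσ), ENNReal.ofReal_rpow_of_pos (inv_pos.2 hσ),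
    Real.enorm_eq_ofReal hσ.le, ← ENNReal.ofReal_mul hσ.le, Real.rpow_sub hσ, Real.rpow_one,
    Real.inv_rpow hσ.le, ← div_eq_mul_inv]

lemma memLp_sinK {σ : ℝ} (hσ : 0 < σ) {p : ℝ≥0∞} (hp : 1 < p) : MemLp (sinK σ) p volume := by
  have hcont : Continuous (sinK σ) := by
    simpa only [funext (sinK_eq_mul_sinc σ)] using by fun_prop
  refine ⟨hcont.aestronglyMeasurable, ?_⟩
  rw [eLpNorm_sinK hσ]
  exact ENNReal.mul_lt_top ENNReal.ofReal_lt_top (memLp_sinc hp).2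

section FintypeProd

variable {ι : Type*} [Fintype ι] {E : ι → Type*} {mE : ∀ i, MeasurableSpace (E i)}
  {μ : (i : ι) → Measure (E i)} [∀ i, SigmaFinite (μ i)] {f : (i : ι) → E i → ℝ} {p : ℝ≥0∞}

lemma norm_rpow_fintype_prod (x : (i : ι) → E i) (q : ℝ) :
    ‖∏ i, f i (x i)‖ ^ q = ∏ i, ‖f i (x i)‖ ^ q := by
  rw [norm_prod, Real.finsetProd_rpow _ _ fun i _ => norm_nonneg _]

lemma MemLp.fintype_prod (hp0 : p ≠ 0) (hp : p ≠ ∞) (hf : ∀ i, MemLp (f i) p (μ i)) :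
    MemLp (fun x : (i : ι) → E i => ∏ i, f i (x i)) p (Measure.pi μ) := by
  have hmeas : AEStronglyMeasurable (fun x : (i : ι) → E i => ∏ i, f i (x i)) (Measure.pi μ) :=
    Finset.aestronglyMeasurable_fun_prod _ fun i _ =>
      (hf i).1.comp_quasiMeasurePreserving (Measure.quasiMeasurePreserving_eval _ i)
  refine (integrable_norm_rpow_iff hmeas hp0 hp).1 ?_
  simp_rw [norm_rpow_fintype_prod]
  exact Integrable.fintype_prod_dep fun i => (integrable_norm_rpow_iff (hf i).1 hp0 hp).2 (hf i)

lemma eLpNorm_fintype_prod (hp0 : p ≠ 0) (hp : p ≠ ∞) (hf : ∀ i, MemLp (f i) p (μ i)) :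
    eLpNorm (fun x : (i : ι) → E i => ∏ i, f i (x i)) p (Measure.pi μ) =
      ∏ i, eLpNorm (f i) p (μ i) := by
  rw [(MemLp.fintype_prod hp0 hp hf).eLpNorm_eq_integral_rpow_norm hp0 hp,
    Finset.prod_congr rfl fun i _ => (hf i).eLpNorm_eq_integral_rpow_norm hp0 hp]
  simp_rw [norm_rpow_fintype_prod]
  rw [integral_fintype_prod_eq_prod (fun i y => ‖f i y‖ ^ p.toReal),
    ← ENNReal.ofReal_prod_of_nonneg fun i _ => by positivity,
    Real.finsetProd_rpow _ _ fun i _ => by positivity]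

end FintypeProd

section ProdSinK

variable {ι : Type*} [Fintype ι] (c : ℝ) {σ : ι → ℝ} {p : ℝ≥0∞}

lemma memLp_prod_sinK (hσ : ∀ i, 0 < σ i) (hp : 1 < p) (hp_top : p ≠ ∞) :
    MemLp (fun x : ι → ℝ => ∏ i, c * sinK (σ i) (x i)) p volume :=
  MemLp.fintype_prod (zero_lt_one.trans hp).ne' hp_top fun i => (memLp_sinK (hσ i) hp).const_mul c

lemma eLpNorm_prod_sinK (hσ : ∀ i, 0 < σ i) (hp : 1 < p) (hp_top : p ≠ ∞) :
    eLpNorm (fun x : ι → ℝ => ∏ i, c * sinK (σ i) (x i)) p volume =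
      ENNReal.ofReal ((∏ i, σ i) ^ (1 - (1 / p).toReal)) *
        (‖c‖ₑ * eLpNorm sinc p volume) ^ Fintype.card ι := by
  rw [volume_pi, eLpNorm_fintype_prod (zero_lt_one.trans hp).ne' hp_top
    fun i => (memLp_sinK (hσ i) hp).const_mul c]
  simp_rw [← smul_eq_mul, ← Pi.smul_def, eLpNorm_const_smul, eLpNorm_sinK (hσ _), smul_eq_mul]
  rw [← Real.finsetProd_rpow _ _ fun i _ => (hσ i).le,
    ENNReal.ofReal_prod_of_nonneg fun i _ => Real.rpow_nonneg (hσ i).le _, ← Finset.card_univ,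
    ← Finset.prod_const, ← Finset.prod_mul_distrib]
  exact Finset.prod_congr rfl fun i _ => by ring

end ProdSinK

lemma ofReal_le_eLpNorm_sub_le {α E : Type*} [MeasurableSpace α] {μ : Measure α}
    [NormedAddCommGroup E] {f g : α → E} {p : ℝ≥0∞} (hf : AEStronglyMeasurable f μ)
    (hg : AEStronglyMeasurable g μ) (hp : 1 ≤ p) {A θ : ℝ} (hA : 0 ≤ A) (hθ : 0 ≤ θ)
    (hf_eq : eLpNorm f p μ = ENNReal.ofReal A) (hg_eq : eLpNorm g p μ = ENNReal.ofReal (θ * A)) :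
    ENNReal.ofReal ((1 - θ) * A) ≤ eLpNorm (f - g) p μ ∧
      eLpNorm (f - g) p μ ≤ ENNReal.ofReal ((1 + θ) * A) := by
  constructor
  · have hf_le : eLpNorm f p μ ≤ eLpNorm (f - g) p μ + eLpNorm g p μ := by
      simpa using eLpNorm_add_le (hf.sub hg) hg hp
    rw [sub_mul, one_mul, ENNReal.ofReal_sub _ (by positivity), ← hf_eq, ← hg_eq]
    exact tsub_le_iff_right.2 hf_le
  · rw [add_mul, one_mul, ENNReal.ofReal_add hA (by positivity), ← hf_eq, ← hg_eq]
    exact eLpNorm_sub_le hf hg hp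

lemma aOf_pos (d : ℕ) (r : Fin d → ℝ) (j : Fin d) : 0 < aOf d r j :=
  Real.rpow_pos_of_pos two_pos _

lemma prod_aOf {d : ℕ} {r : Fin d → ℝ} (hr : ∀ j, 0 < r j) : ∏ j, aOf d r j = 2 ^ d := by
  rcases Nat.eq_zero_or_pos d with rfl | hd
  · simp
  have hS : ∑ j, (r j)⁻¹ ≠ 0 :=
    (Finset.sum_pos (fun j _ => inv_pos.2 (hr j)) (Finset.univ_nonempty_iff.2 ⟨⟨0, hd⟩⟩)).ne'
  simp only [aOf, ← Real.rpow_sum_of_pos two_pos, div_eq_mul_inv, ← Finset.mul_sum, gOf]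
  rw [mul_inv, inv_inv, mul_assoc, inv_mul_cancel₀ hS, mul_one, Real.rpow_natCast]

noncomputable def dilatedSincProd (d : ℕ) (r : Fin d → ℝ) (m : ℕ) : (Fin d → ℝ) → ℝ :=
  fun x => ∏ j, Real.sqrt (2 / Real.pi) * sinK (aOf d r j ^ m) (x j)

lemma Fn_eq_sub (d : ℕ) (r : Fin d → ℝ) (n : ℕ) :
    Fn d r n = dilatedSincProd d r n - dilatedSincProd d r (n - 1) := rfl

lemma memLp_dilatedSincProd (d : ℕ) (r : Fin d → ℝ) {p : ℝ≥0∞} (hp : 1 < p) (hp_top : p ≠ ∞)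
    (m : ℕ) : MemLp (dilatedSincProd d r m) p volume :=
  memLp_prod_sinK _ (fun j => pow_pos (aOf_pos d r j) m) hp hp_top

lemma eLpNorm_dilatedSincProd {d : ℕ} {r : Fin d → ℝ} (hr : ∀ j, 0 < r j) {p : ℝ≥0∞} (hp : 1 < p)
    (hp_top : p ≠ ∞) (m : ℕ) :
    eLpNorm (dilatedSincProd d r m) p volume =
      ENNReal.ofReal (2 ^ (d * m * (1 - (1 / p).toReal))) *
        (‖Real.sqrt (2 / Real.pi)‖ₑ * eLpNorm sinc p volume) ^ d := by
  unfold dilatedSincProd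
  rw [eLpNorm_prod_sinK _ (fun j => pow_pos (aOf_pos d r j) m) hp hp_top,
    Finset.prod_pow, prod_aOf hr, Fintype.card_fin, ← pow_mul, ← Real.rpow_natCast,
    ← Real.rpow_mul zero_le_two]
  push_cast
  rfl

/-- Order relation `‖F_n‖_{L_p(ℝ^d)} ≍ 2^{dn/p'}` for `1 < p < ∞`, `1/p + 1/p' = 1`. -/
theorem Fn_lp_order
    (d : ℕ) (hd : 1 ≤ d) (r : Fin d → ℝ) (hr : ∀ j, 0 < r j)
    (p p' : ℝ) (hp1 : 1 < p) (hconj : 1 / p + 1 / p' = 1) :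
    ∃ c C : ℝ, 0 < c ∧ 0 < C ∧
      ∀ n : ℕ, 1 ≤ n →
        MemLp (Fn d r n) (ENNReal.ofReal p) volume ∧
        ENNReal.ofReal (c * (2 : ℝ) ^ (((d : ℝ) * n) / p')) ≤
          eLpNorm (Fn d r n) (ENNReal.ofReal p) volume ∧
        eLpNorm (Fn d r n) (ENNReal.ofReal p) volume ≤
          ENNReal.ofReal (C * (2 : ℝ) ^ (((d : ℝ) * n) / p')) := by
  have hp : 1 < ENNReal.ofReal p := by simpa using hp1
  have hp' : 0 < p' := one_div_pos.1 (by linarith [(div_lt_one (by linarith)).2 hp1])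
  have hexp : 1 - (1 / ENNReal.ofReal p).toReal = 1 / p' := by
    rw [one_div, ENNReal.toReal_inv, ENNReal.toReal_ofReal (by linarith), ← one_div]
    linarith
  set K := (‖Real.sqrt (2 / Real.pi)‖ₑ * eLpNorm sinc (ENNReal.ofReal p) volume) ^ d
  have hK0 : K ≠ 0 := pow_ne_zero _ <| mul_ne_zero (by simp [Real.sqrt_ne_zero', Real.pi_pos])
    (eLpNorm_sinc_ne_zero (zero_lt_one.trans hp).ne')
  have hK_top : K ≠ ∞ :=
    ENNReal.pow_ne_top <| ENNReal.mul_ne_top enorm_ne_top (memLp_sinc hp).2.ne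
  have hK_pos : 0 < K.toReal := ENNReal.toReal_pos hK0 hK_top
  set θ : ℝ := 2 ^ (-(d / p'))
  have hθ0 : 0 < θ := Real.rpow_pos_of_pos two_pos _
  have hθ1 : θ < 1 := Real.rpow_lt_one_of_one_lt_of_neg one_lt_two
    (neg_neg_of_pos (div_pos (by exact_mod_cast hd) hp'))
  refine ⟨K.toReal * (1 - θ), K.toReal * (1 + θ), by nlinarith, by nlinarith, fun n hn => ?_⟩
  have hnorm (m : ℕ) : eLpNorm (dilatedSincProd d r m) (ENNReal.ofReal p) volume =
      ENNReal.ofReal (2 ^ (d * m / p') * K.toReal) := by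
    rw [eLpNorm_dilatedSincProd hr hp ENNReal.ofReal_ne_top, hexp,
      ENNReal.ofReal_mul (by positivity), ENNReal.ofReal_toReal hK_top, mul_one_div]
  have hshift :
      (2 : ℝ) ^ (d * (n - 1 : ℕ) / p') * K.toReal = θ * (2 ^ (d * n / p') * K.toReal) := by
    rw [← mul_assoc, ← Real.rpow_add two_pos, Nat.cast_sub hn]
    ring_nf
  have hmemLp := memLp_dilatedSincProd d r hp ENNReal.ofReal_ne_top
  obtain ⟨hlower, hupper⟩ := ofReal_le_eLpNorm_sub_le (hmemLp n).1 (hmemLp (n - 1)).1 hp.le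
    (by positivity) hθ0.le (hnorm n) (hshift ▸ hnorm (n - 1))
  rw [← Fn_eq_sub] at hlower hupper
  refine ⟨Fn_eq_sub d r n ▸ (hmemLp n).sub (hmemLp (n - 1)), ?_, ?_⟩
  · convert hlower using 2; ring
  · convert hupper using 2; ring
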